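/- Let L be the N=1 Lax matrix L = [[α1, z+β1, β3],[β3·z + γ1, α2-α1, z+β2],[z² - (β1+β2)z + γ3, -2β3·z + γ2, -α2]] over ℂ[z]. Then det(L - w·I) = -w³ + z⁴ + w·(h5·z + h8) + h6·z² + h9·z + h12 for some constants h5, h6, h8, h9, h12 ∈ ℂ depending polynomially on α1, α2, β1, β2, β3, γ1, γ2, γ3; in particular the coefficients of w·z² and of z³ in det(L - wI) + w³ - z⁴ vanish. -/

import Mathlib

open Polynomial

/-- The N = 1 Lax matrix of the Boussinesq hierarchy, over ℂ[z]. -/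
noncomputable def LaxN1 (a1 a2 b1 b2 b3 g1 g2 g3 : ℂ) :
    Matrix (Fin 3) (Fin 3) (Polynomial ℂ) :=
  !![C a1, X + C b1, C b3;
     C b3 * X + C g1, C (a2 - a1), X + C b2;
     X ^ 2 - C (b1 + b2) * X + C g3, -2 * C b3 * X + C g2, C (-a2)]

/-- det(L - w·I) as a polynomial in w with coefficients in ℂ[z]. -/
noncomputable def specDet (a1 a2 b1 b2 b3 g1 g2 g3 : ℂ) : Polynomial (Polynomial ℂ) :=
  (((LaxN1 a1 a2 b1 b2 b3 g1 g2 g3).map Polynomial.C)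
    - (Polynomial.X : Polynomial (Polynomial ℂ)) • 1).det

lemma specDet_eq (a1 a2 b1 b2 b3 g1 g2 g3 : ℂ) :
    specDet a1 a2 b1 b2 b3 g1 g2 g3
      = -(Polynomial.X : Polynomial (Polynomial ℂ)) ^ 3
        + Polynomial.C ((X : Polynomial ℂ) ^ 4)
        + Polynomial.X * Polynomial.C (Polynomial.C (g1 + g2 - 3*b2*b3) * X
            + Polynomial.C (a1^2 + a2^2 - a1*a2 + b2*g2 + b1*g1 + b3*g3))
        + Polynomial.C (Polynomial.C (3*a1*b3 + g3 - b1*b2 - b2^2 - b1^2 - 2*b3^3) * X ^ 2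
            + Polynomial.C (-a1*g2 + a1*b2*b3 + a2*g1 + b2*g3 + 2*a2*b1*b3 + b1*g3
                - b1^2*b2 - b1*b2^2 + b3^2*g2 - 2*b3^2*g1 + a2*b2*b3 - a1*b1*b3) * X
            + Polynomial.C (-a1*a2^2 + a1^2*a2 - a1*b2*g2 + a2*b1*g1 + b1*b2*g3
                + b3*g1*g2 - a2*b3*g3 + a1*b3*g3)) := by
  simp only [specDet, LaxN1, smul_eq_mul, mul_one, Matrix.det_fin_three,
    Matrix.sub_apply, Matrix.map_apply, Matrix.cons_val', Matrix.cons_val_zero,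
    Matrix.cons_val_one, Matrix.head_cons, Matrix.empty_val', Matrix.cons_val_fin_one,
    Matrix.head_fin_const, Matrix.cons_val_two, Matrix.tail_cons,
    Matrix.one_apply_eq, Matrix.one_apply_ne, ne_eq, Fin.ext_iff]
  simp only [map_add, map_mul, map_sub, map_pow, map_neg, map_ofNat, map_one, map_zero,
    Matrix.one_apply]
  norm_num [Fin.ext_iff]
  simp only [Matrix.cons_val_two, Matrix.tail_cons, Matrix.head_cons, Matrix.vecHead, Matrix.cons_val_zero,
    map_add, map_mul, map_sub, map_pow, map_neg, map_ofNat]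
  ring

/-- The spectral curve of the N = 1 system:
det(L - wI) = -w³ + z⁴ + w(h₅ z + h₈) + h₆ z² + h₉ z + h₁₂, and the
coefficients of w·z² and of z³ vanish. -/
theorem spectral_curve_form (a1 a2 b1 b2 b3 g1 g2 g3 : ℂ) :
    (∃ h5 h6 h8 h9 h12 : ℂ,
      specDet a1 a2 b1 b2 b3 g1 g2 g3
        = -(Polynomial.X : Polynomial (Polynomial ℂ)) ^ 3
          + Polynomial.C ((X : Polynomial ℂ) ^ 4)
          + Polynomial.X * Polynomial.C (Polynomial.C h5 * X + Polynomial.C h8)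
          + Polynomial.C (Polynomial.C h6 * X ^ 2 + Polynomial.C h9 * X + Polynomial.C h12)) ∧
    ((specDet a1 a2 b1 b2 b3 g1 g2 g3).coeff 1).coeff 2 = 0 ∧
    ((specDet a1 a2 b1 b2 b3 g1 g2 g3).coeff 0).coeff 3 = 0 := by
  have h := specDet_eq a1 a2 b1 b2 b3 g1 g2 g3
  refine ⟨⟨_, _, _, _, _, h⟩, ?_, ?_⟩
  · rw [h]
    simp only [coeff_add, coeff_neg, coeff_X_pow, coeff_C, coeff_X_mul, coeff_C_mul,
      coeff_X, coeff_sub, coeff_zero]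
    norm_num [coeff_add, coeff_C_mul, coeff_X, coeff_C, coeff_X_pow]
    rw [← C_pow, ← C_pow, coeff_C, coeff_C]; norm_num
  · rw [h]
    simp only [coeff_add, coeff_neg, coeff_X_pow, coeff_C, coeff_X_mul, coeff_C_mul,
      coeff_X, coeff_sub, coeff_zero]
    norm_num [coeff_add, coeff_C_mul, coeff_X, coeff_C, coeff_X_pow]
    simp only [← C_pow, ← C_mul, ← C_add, ← C_sub, ← C_neg]
    simp only [coeff_C_mul, coeff_X_pow, coeff_C]
    norm_num
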